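/- For z, z′ ∈ ℂ³, one has σ(z) = σ(z′) if and only if z′ = g·z for some g ∈ T²; that is, the fibres of σ are exactly the T²-orbits in ℂ³. -/

import Mathlib

/-- The action of `(θ, φ) ∈ T²` on `ℂ³`,
`(e^{iθ}, e^{iφ})·(z₁,z₂,z₃) = (e^{iθ}z₁, e^{iφ}z₂, e^{−i(θ+φ)}z₃)`. -/
noncomputable def torusAct (θ φ : ℝ) (z : ℂ × ℂ × ℂ) : ℂ × ℂ × ℂ :=
  (Complex.exp (θ * Complex.I) * z.1,
   Complex.exp (φ * Complex.I) * z.2.1,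
   Complex.exp (-(θ + φ) * Complex.I) * z.2.2)

/-- The invariant map `σ = (σ₁,…,σ₅) : ℂ³ → ℝ⁵` with `σ₁ + iσ₂ = −conj(z₁z₂z₃)`,
`σ₃ = ½(|z₂|² − |z₃|²)`, `σ₄ = ½(|z₃|² − |z₁|²)`, `σ₅ = |z₃|²`. -/
noncomputable def sigmaMap (z : ℂ × ℂ × ℂ) : Fin 5 → ℝ :=
  ![(-(starRingEnd ℂ) (z.1 * z.2.1 * z.2.2)).re,
    (-(starRingEnd ℂ) (z.1 * z.2.1 * z.2.2)).im,
    (‖z.2.1‖ ^ 2 - ‖z.2.2‖ ^ 2) / 2,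
    (‖z.2.2‖ ^ 2 - ‖z.1‖ ^ 2) / 2,
    ‖z.2.2‖ ^ 2]

/-!
`σ` records exactly the moduli `|z₁|, |z₂|, |z₃|` and the product `z₁z₂z₃`. Triples with the
same moduli differ by three phases, and equality of the products forces these phases to multiply
to `1`, except when some coordinate vanishes, in which case its phase is free and can be chosen
to make the product `1`.
-/

open Complex

lemma exists_exp_mul_I_mul_eq_of_norm_eq {a b : ℂ} (h : ‖a‖ = ‖b‖) :
    ∃ t : ℝ, b = exp (t * I) * a := by
  refine ⟨b.arg - a.arg, ?_⟩
  calc b = ‖b‖ * exp (b.arg * I) := (norm_mul_exp_arg_mul_I b).symm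
    _ = exp (↑(b.arg - a.arg) * I) * (‖a‖ * exp (a.arg * I)) := by
        rw [h, mul_left_comm, ← exp_add]
        push_cast
        ring_nf
    _ = exp (↑(b.arg - a.arg) * I) * a := by rw [norm_mul_exp_arg_mul_I]

lemma norm_exp_ofReal_mul_I_mul (t : ℝ) (a : ℂ) : ‖exp (t * I) * a‖ = ‖a‖ := by
  rw [norm_mul, norm_exp_ofReal_mul_I, one_mul]

lemma torusAct_mk (θ φ : ℝ) (z₁ z₂ z₃ : ℂ) :
    torusAct θ φ (z₁, z₂, z₃) =
      (exp (θ * I) * z₁, exp (φ * I) * z₂, exp (↑(-(θ + φ)) * I) * z₃) := by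
  rw [torusAct, ofReal_neg, ofReal_add]

lemma exp_ofReal_mul_I_mul_exp_ofReal_mul_I (s t : ℝ) :
    exp (s * I) * exp (t * I) = exp (↑(s + t) * I) := by
  rw [← exp_add, ofReal_add, add_mul]

lemma exp_ofReal_mul_I_mul_exp_neg_ofReal_mul_I (t : ℝ) : exp (t * I) * exp (↑(-t) * I) = 1 := by
  rw [exp_ofReal_mul_I_mul_exp_ofReal_mul_I, add_neg_cancel, ofReal_zero, zero_mul, exp_zero]

lemma sigmaMap_eq_iff {z₁ z₂ z₃ w₁ w₂ w₃ : ℂ} :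
    sigmaMap (z₁, z₂, z₃) = sigmaMap (w₁, w₂, w₃) ↔
      ‖z₁‖ = ‖w₁‖ ∧ ‖z₂‖ = ‖w₂‖ ∧ ‖z₃‖ = ‖w₃‖ ∧ z₁ * z₂ * z₃ = w₁ * w₂ * w₃ := by
  constructor
  · intro h
    have hσ (i : Fin 5) := congrFun h i
    simp only [sigmaMap, Fin.forall_fin_succ, Matrix.cons_val_zero, Matrix.cons_val_succ] at hσ
    obtain ⟨hre, him, hσ₃, hσ₄, hσ₅, -⟩ := hσ
    have h₃ : ‖z₃‖ = ‖w₃‖ := (sq_eq_sq₀ (norm_nonneg _) (norm_nonneg _)).mp hσ₅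
    have h₂ : ‖z₂‖ = ‖w₂‖ := (sq_eq_sq₀ (norm_nonneg _) (norm_nonneg _)).mp (by linarith)
    have h₁ : ‖z₁‖ = ‖w₁‖ := (sq_eq_sq₀ (norm_nonneg _) (norm_nonneg _)).mp (by linarith)
    exact ⟨h₁, h₂, h₃, star_injective (neg_injective (Complex.ext hre him))⟩
  · rintro ⟨h₁, h₂, h₃, hprod⟩
    simp only [sigmaMap, h₁, h₂, h₃, hprod]

lemma exists_phases_of_mul_eq {a₁ a₂ b₁ b₂ : ℂ} (s : ℝ) (h₁ : ‖a₁‖ = ‖b₁‖) (h₂ : ‖a₂‖ = ‖b₂‖)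
    (h : b₁ * b₂ = exp (s * I) * (a₁ * a₂)) :
    ∃ t₁ t₂ : ℝ, t₁ + t₂ = s ∧ b₁ = exp (t₁ * I) * a₁ ∧ b₂ = exp (t₂ * I) * a₂ := by
  by_cases ha₁ : a₁ = 0
  · obtain ⟨t₂, ht₂⟩ := exists_exp_mul_I_mul_eq_of_norm_eq h₂
    have hb₁ : b₁ = 0 := by rwa [← norm_eq_zero, ← h₁, norm_eq_zero]
    exact ⟨s - t₂, t₂, sub_add_cancel s t₂, by rw [ha₁, hb₁, mul_zero], ht₂⟩
  · obtain ⟨t₁, ht₁⟩ := exists_exp_mul_I_mul_eq_of_norm_eq h₁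
    refine ⟨t₁, s - t₁, add_sub_cancel t₁ s, ht₁, ?_⟩
    apply mul_left_cancel₀ (mul_ne_zero (exp_ne_zero (t₁ * I)) ha₁)
    have hexp : exp (t₁ * I) * exp (↑(s - t₁) * I) = exp (s * I) := by
      rw [exp_ofReal_mul_I_mul_exp_ofReal_mul_I, add_sub_cancel]
    linear_combination h - b₂ * ht₁ - a₁ * a₂ * hexp

lemma exists_torusAct_eq_iff {z₁ z₂ z₃ w₁ w₂ w₃ : ℂ} :
    (∃ θ φ : ℝ, (w₁, w₂, w₃) = torusAct θ φ (z₁, z₂, z₃)) ↔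
      ‖z₁‖ = ‖w₁‖ ∧ ‖z₂‖ = ‖w₂‖ ∧ ‖z₃‖ = ‖w₃‖ ∧ z₁ * z₂ * z₃ = w₁ * w₂ * w₃ := by
  simp only [torusAct_mk, Prod.mk.injEq]
  constructor
  · rintro ⟨θ, φ, rfl, rfl, rfl⟩
    simp only [norm_exp_ofReal_mul_I_mul, true_and]
    have hphases : exp (θ * I) * exp (φ * I) * exp (↑(-(θ + φ)) * I) = 1 := by
      rw [exp_ofReal_mul_I_mul_exp_ofReal_mul_I, exp_ofReal_mul_I_mul_exp_neg_ofReal_mul_I]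
    linear_combination -(z₁ * z₂ * z₃) * hphases
  · rintro ⟨h₁, h₂, h₃, hprod⟩
    by_cases hz₃ : z₃ = 0
    · obtain ⟨θ, hθ⟩ := exists_exp_mul_I_mul_eq_of_norm_eq h₁
      obtain ⟨φ, hφ⟩ := exists_exp_mul_I_mul_eq_of_norm_eq h₂
      have hw₃ : w₃ = 0 := by rwa [← norm_eq_zero, ← h₃, norm_eq_zero]
      exact ⟨θ, φ, hθ, hφ, by rw [hz₃, hw₃, mul_zero]⟩
    · obtain ⟨t, ht⟩ := exists_exp_mul_I_mul_eq_of_norm_eq h₃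
      have hprod₁₂ : w₁ * w₂ = exp (↑(-t) * I) * (z₁ * z₂) := by
        apply mul_right_cancel₀ hz₃
        rw [ht] at hprod
        linear_combination -exp (↑(-t) * I) * hprod -
          w₁ * w₂ * z₃ * exp_ofReal_mul_I_mul_exp_neg_ofReal_mul_I t
      obtain ⟨θ, φ, hsum, hθ, hφ⟩ := exists_phases_of_mul_eq (-t) h₁ h₂ hprod₁₂
      exact ⟨θ, φ, hθ, hφ, by rw [ht, hsum, neg_neg]⟩

/-- The fibres of `σ` are exactly the `T²`-orbits in `ℂ³`. -/
theorem sigma_fibres_eq_orbits (z w : ℂ × ℂ × ℂ) :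
    sigmaMap z = sigmaMap w ↔ ∃ θ φ : ℝ, w = torusAct θ φ z := by
  obtain ⟨z₁, z₂, z₃⟩ := z
  obtain ⟨w₁, w₂, w₃⟩ := w
  rw [sigmaMap_eq_iff, exists_torusAct_eq_iff]
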